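/- arXiv:1306.1728 — 3 statements merged into one kernel-verified Lean document; each statement's English description precedes it below -/
import Mathlib

section
/- For η ≥ 0, μ > 0, x > 0 and y ≥ 0, the η-th moment of the partial non-central chi-squared distribution satisfies the series expansion Q_{η,μ}(x,y) = e^{-x} Σ_{n=0}^∞ (x^n / n!) · Γ(η+μ+n, y) / Γ(μ+n), where Γ(a, y) = ∫_y^∞ t^{a-1} e^{-t} dt is the upper incomplete gamma function. -/
open Real MeasureTheory

/-- Modified Bessel function of the first kind `I_ν(z)` via its Maclaurin series. -/
noncomputable def besselI (ν z : ℝ) : ℝ :=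
  (z / 2) ^ ν * ∑' n : ℕ, (z ^ 2 / 4) ^ n / (n.factorial * Real.Gamma (ν + n + 1))

/-- Upper incomplete gamma function `Γ(a, y)`. -/
noncomputable def uGamma (a y : ℝ) : ℝ := ∫ t in Set.Ioi y, t ^ (a - 1) * Real.exp (-t)

/-- Regularized upper incomplete gamma function `Q_a(y) = Γ(a,y)/Γ(a)`. -/
noncomputable def regQ (a y : ℝ) : ℝ := uGamma a y / Real.Gamma a

/-- η-th moment of the partial non-central chi-squared distribution (Nuttall Q-function). -/
noncomputable def nuttallQ (η μ x y : ℝ) : ℝ :=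
  x ^ ((1 - μ) / 2) *
    ∫ t in Set.Ioi y, t ^ (η + (μ - 1) / 2) * Real.exp (-t - x) *
      besselI (μ - 1) (2 * Real.sqrt (x * t))

/-- Generalized Marcum Q-function. -/
noncomputable def marcumQ (μ x y : ℝ) : ℝ := nuttallQ 0 μ x y

/-- Complementary Marcum function `P_μ(x,y)`. -/
noncomputable def marcumP (μ x y : ℝ) : ℝ :=
  x ^ ((1 - μ) / 2) *
    ∫ t in Set.Ioc 0 y, t ^ ((μ - 1) / 2) * Real.exp (-t - x) *
      besselI (μ - 1) (2 * Real.sqrt (x * t))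

/-!
Expanding `I_{μ-1}(2√(xt))` in its power series turns the integrand into
`x^{(μ-1)/2} e^{-x} ∑ₙ xⁿ t^{η+μ+n-1} e^{-t} / (n! Γ(μ+n))`, and the `n`-th term integrates over
`(y, ∞)` to `xⁿ Γ(η+μ+n, y) / (n! Γ(μ+n))`. All terms are nonnegative and
`Γ(η+μ+n, y) ≤ Γ(η+μ+n)`, while `xⁿ Γ(η+μ+n) / (n! Γ(μ+n))` is summable by the ratio test, so the
sum and the integral may be interchanged.
-/

open Filter Topology Set

theorem integral_tsum_of_nonneg {α ι : Type*} [MeasurableSpace α] [Countable ι] {μ : Measure α}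
    {F : ι → α → ℝ} (hF_nonneg : ∀ n, 0 ≤ᵐ[μ] F n) (hF_int : ∀ n, Integrable (F n) μ)
    (hF_sum : Summable fun n ↦ ∫ a, F n a ∂μ) :
    ∫ a, ∑' n, F n a ∂μ = ∑' n, ∫ a, F n a ∂μ := by
  refine (integral_tsum_of_summable_integral_norm hF_int (hF_sum.congr fun n ↦ ?_)).symm
  refine integral_congr_ae ?_
  filter_upwards [hF_nonneg n] with a ha
  exact (Real.norm_of_nonneg ha).symm

theorem summable_pow_div_factorial_mul_Gamma_div_Gamma {a b : ℝ} (ha : 0 < a) (hb : 0 < b)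
    (x : ℝ) :
    Summable fun n : ℕ ↦ x ^ n / n.factorial * (Gamma (a + n) / Gamma (b + n)) := by
  set f : ℕ → ℝ := fun n ↦ x ^ n / n.factorial * (Gamma (a + n) / Gamma (b + n))
  have hGamma_succ {c : ℝ} (hc : 0 < c) (n : ℕ) :
      Gamma (c + (n + 1)) = (c + n) * Gamma (c + n) := by
    rw [← add_assoc, Gamma_add_one (by positivity)]
  have hf_succ (n : ℕ) : f (n + 1) = x / (n + 1) * ((a + n) / (b + n)) * f n := by
    have := (Gamma_pos_of_pos (show 0 < b + n by positivity)).ne'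
    simp only [f, Nat.cast_succ, hGamma_succ ha, hGamma_succ hb, pow_succ, Nat.factorial_succ,
      Nat.cast_mul]
    field_simp
  have hratio_le (n : ℕ) : (a + n) / (b + n) ≤ a / b + 1 := by
    have h_cancel : a / b * b = a := div_mul_cancel₀ a hb.ne'
    have : 0 ≤ a / b * n := by positivity
    rw [div_le_iff₀ (by positivity)]
    nlinarith
  have hlim : Tendsto (fun n : ℕ ↦ |x| * (a / b + 1) * (1 / ((n : ℝ) + 1))) atTop (𝓝 0) := by
    simpa using tendsto_one_div_add_atTop_nhds_zero_nat.const_mul (|x| * (a / b + 1))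
  refine summable_of_ratio_norm_eventually_le (r := 1 / 2) (by norm_num) ?_
  filter_upwards [hlim.eventually (ge_mem_nhds (by norm_num : (0 : ℝ) < 1 / 2))] with n hn
  rw [hf_succ, norm_mul]
  gcongr
  calc ‖x / (n + 1) * ((a + n) / (b + n))‖ = |x| / (n + 1) * ((a + n) / (b + n)) := by
        rw [norm_mul, norm_div, Real.norm_of_nonneg (by positivity : (0 : ℝ) ≤ (a + n) / (b + n)),
          Real.norm_of_nonneg (by positivity : (0 : ℝ) ≤ n + 1), Real.norm_eq_abs]
    _ ≤ |x| / (n + 1) * (a / b + 1) := by gcongr; exact hratio_le n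
    _ = |x| * (a / b + 1) * (1 / (n + 1)) := by ring
    _ ≤ 1 / 2 := hn

theorem integrableOn_rpow_mul_exp_neg_Ioi {a y : ℝ} (ha : 0 < a) (hy : 0 ≤ y) :
    IntegrableOn (fun t ↦ t ^ (a - 1) * exp (-t)) (Ioi y) :=
  ((GammaIntegral_convergent ha).mono_set (Ioi_subset_Ioi hy)).congr_fun
    (fun _ _ ↦ mul_comm _ _) measurableSet_Ioi

theorem uGamma_nonneg (a : ℝ) {y : ℝ} (hy : 0 ≤ y) : 0 ≤ uGamma a y :=
  setIntegral_nonneg measurableSet_Ioi fun _ ht ↦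
    mul_nonneg (rpow_nonneg (hy.trans (le_of_lt ht)) _) (exp_pos _).le

theorem uGamma_le_Gamma {a y : ℝ} (ha : 0 < a) (hy : 0 ≤ y) : uGamma a y ≤ Gamma a := by
  rw [uGamma, Gamma_eq_integral ha]
  calc ∫ t in Ioi y, t ^ (a - 1) * exp (-t)
      ≤ ∫ t in Ioi 0, t ^ (a - 1) * exp (-t) := by
        refine setIntegral_mono_set (integrableOn_rpow_mul_exp_neg_Ioi ha le_rfl) ?_
          (Ioi_subset_Ioi hy).eventuallyLE
        filter_upwards [ae_restrict_mem measurableSet_Ioi] with t (ht : 0 < t)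
        positivity
    _ = ∫ t in Ioi 0, exp (-t) * t ^ (a - 1) :=
        setIntegral_congr_fun measurableSet_Ioi fun _ _ ↦ mul_comm _ _

theorem summable_pow_div_factorial_mul_uGamma_div_Gamma {a b y : ℝ} (ha : 0 < a) (hb : 0 < b)
    (hy : 0 ≤ y) (x : ℝ) :
    Summable fun n : ℕ ↦ x ^ n / n.factorial * (uGamma (a + n) y / Gamma (b + n)) := by
  refine (summable_pow_div_factorial_mul_Gamma_div_Gamma ha hb |x|).of_norm_bounded fun n ↦ ?_
  have hGamma_pos := Gamma_pos_of_pos (show 0 < b + n by positivity)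
  rw [norm_mul, norm_div, norm_div, norm_pow, Real.norm_natCast,
    Real.norm_of_nonneg (uGamma_nonneg _ hy), Real.norm_of_nonneg hGamma_pos.le, Real.norm_eq_abs]
  gcongr
  exact uGamma_le_Gamma (by positivity) hy

theorem besselI_two_mul_sqrt (ν : ℝ) {s : ℝ} (hs : 0 ≤ s) :
    besselI ν (2 * √s) = s ^ (ν / 2) * ∑' n : ℕ, s ^ n / (n.factorial * Gamma (ν + n + 1)) := by
  rw [besselI, mul_div_cancel_left₀ _ two_ne_zero, mul_pow, sq_sqrt hs, sqrt_eq_rpow,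
    ← rpow_mul hs]
  ring_nf

theorem nuttallQ_integrand_eq_tsum (η μ : ℝ) {x t : ℝ} (hx : 0 < x) (ht : 0 < t) :
    t ^ (η + (μ - 1) / 2) * exp (-t - x) * besselI (μ - 1) (2 * √(x * t)) =
      x ^ ((μ - 1) / 2) * exp (-x) *
        ∑' n : ℕ, x ^ n / n.factorial * (t ^ (η + μ + n - 1) * exp (-t) / Gamma (μ + n)) := by
  rw [besselI_two_mul_sqrt (μ - 1) (mul_pos hx ht).le]
  simp_rw [← tsum_mul_left]
  refine tsum_congr fun n ↦ ?_
  rw [show μ - 1 + (n : ℝ) + 1 = μ + n by ring, mul_rpow hx.le ht.le, mul_pow,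
    show -t - x = -t + -x by ring, exp_add,
    show η + μ + (n : ℝ) - 1 = η + (μ - 1) / 2 + (μ - 1) / 2 + n by ring,
    rpow_add_natCast ht.ne', rpow_add ht (η + (μ - 1) / 2)]
  ring

theorem nuttallQ_series (η μ x y : ℝ) (hη : 0 ≤ η) (hμ : 0 < μ) (hx : 0 < x) (hy : 0 ≤ y) :
    nuttallQ η μ x y =
      Real.exp (-x) * ∑' n : ℕ, x ^ n / n.factorial * (uGamma (η + μ + n) y / Real.Gamma (μ + n)) := by
  set F : ℕ → ℝ → ℝ := fun n t ↦
    x ^ n / n.factorial * (t ^ (η + μ + n - 1) * exp (-t) / Gamma (μ + n))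
  have hF_integral (n : ℕ) :
      ∫ t in Ioi y, F n t = x ^ n / n.factorial * (uGamma (η + μ + n) y / Gamma (μ + n)) := by
    rw [integral_const_mul, integral_div, uGamma]
  have hF_nonneg (n : ℕ) : 0 ≤ᵐ[volume.restrict (Ioi y)] F n := by
    filter_upwards [ae_restrict_mem measurableSet_Ioi] with t (ht : y < t)
    have := Gamma_pos_of_pos (show 0 < μ + n by positivity)
    have := hy.trans_lt ht
    simp only [F]
    positivity
  have hF_int (n : ℕ) : IntegrableOn (F n) (Ioi y) :=
    ((integrableOn_rpow_mul_exp_neg_Ioi (by positivity) hy).div_const _).const_mul _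
  have hF_sum : Summable fun n ↦ ∫ t in Ioi y, F n t := by
    simpa only [hF_integral] using
      summable_pow_div_factorial_mul_uGamma_div_Gamma (add_pos_of_nonneg_of_pos hη hμ) hμ hy x
  rw [nuttallQ, setIntegral_congr_fun measurableSet_Ioi
      fun t (ht : y < t) ↦ nuttallQ_integrand_eq_tsum η μ hx (hy.trans_lt ht),
    integral_const_mul, integral_tsum_of_nonneg hF_nonneg hF_int hF_sum]
  simp only [hF_integral]
  rw [← mul_assoc, ← mul_assoc, ← rpow_add hx, show (1 - μ) / 2 + (μ - 1) / 2 = 0 by ring,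
    rpow_zero, one_mul]
end

section
/- For η ≥ 1, μ > 0, x > 0 and y > 0, the recurrence written in terms of the scaled Bessel function Ĩ_μ(z) = e^{-z} I_μ(z) holds: Q_{η,μ+1}(x,y) = Q_{η,μ}(x,y) + η·Q_{η-1,μ+1}(x,y) + (y/x)^{μ/2} · y^η · e^{-(√x−√y)²} · Ĩ_μ(2√(xy)). -/
/-!
With the entire Bessel–Clifford function `C_ν(z) = ∑ zⁿ / (n! Γ(ν + n + 1))` one has
`I_ν(2√z) = z^(ν/2) C_ν(z)`, so
`Q_{η,μ}(x, y) = ∫_y^∞ t^(η+μ-1) e^(-t-x) C_{μ-1}(x t) dt`.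
Since `C_ν' = C_{ν+1}` and `C_{ν-1}(z) = ν C_ν(z) + z C_{ν+1}(z)`, the derivative of
`t^(η+μ) e^(-t-x) C_μ(x t)` is `η` times the integrand of `Q_{η-1,μ+1}`, plus that of
`Q_{η,μ}`, minus that of `Q_{η,μ+1}`. The bound `C_ν(z) ≤ c e^(z/(2x))` makes all three
integrable on `(y, ∞)`, so integrating the derivative leaves only the boundary value at `y`,
which is the last summand of the recurrence.
-/

open Real MeasureTheory

open Filter Set

noncomputable def besselCliffordTerm (ν : ℝ) (n : ℕ) (z : ℝ) : ℝ :=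
  z ^ n / (n.factorial * Gamma (ν + n + 1))

noncomputable def besselClifford (ν z : ℝ) : ℝ := ∑' n : ℕ, besselCliffordTerm ν n z

section BesselClifford

variable {ν : ℝ}

theorem add_nat_add_one_pos (hν : 0 < ν + 1) (n : ℕ) : 0 < ν + n + 1 := by
  have : (0 : ℝ) ≤ n := n.cast_nonneg
  linarith

theorem pow_min_mul_factorial_mul_Gamma_le (hν : 0 < ν + 1) (n : ℕ) :
    min 1 (ν + 1) ^ n * n.factorial * Gamma (ν + 1) ≤ Gamma (ν + n + 1) := by
  induction n with
  | zero => simp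
  | succ n ih =>
    have hn := add_nat_add_one_pos hν n
    have hmin : min 1 (ν + 1) * (n + 1) ≤ ν + n + 1 := by
      have : (0 : ℝ) ≤ n := n.cast_nonneg
      rcases min_cases 1 (ν + 1) with ⟨h, h'⟩ | ⟨h, h'⟩ <;> rw [h] <;> nlinarith
    calc min 1 (ν + 1) ^ (n + 1) * (n + 1).factorial * Gamma (ν + 1)
        = (min 1 (ν + 1) * (n + 1)) * (min 1 (ν + 1) ^ n * n.factorial * Gamma (ν + 1)) := by
          push_cast [Nat.factorial_succ]; ring
      _ ≤ (ν + n + 1) * Gamma (ν + n + 1) := by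
          gcongr
      _ = Gamma (ν + (n + 1 : ℕ) + 1) := by
          rw [Nat.cast_succ, ← add_assoc, Gamma_add_one hn.ne']

theorem besselCliffordTerm_nonneg (hν : 0 < ν + 1) (n : ℕ) {z : ℝ} (hz : 0 ≤ z) :
    0 ≤ besselCliffordTerm ν n z := by
  have := Gamma_pos_of_pos (add_nat_add_one_pos hν n)
  unfold besselCliffordTerm
  positivity

theorem abs_besselCliffordTerm (hν : 0 < ν + 1) (n : ℕ) (z : ℝ) :
    |besselCliffordTerm ν n z| = besselCliffordTerm ν n |z| := by
  have := Gamma_pos_of_pos (add_nat_add_one_pos hν n)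
  rw [besselCliffordTerm, besselCliffordTerm, abs_div, abs_pow,
    abs_of_pos (by positivity : (0 : ℝ) < n.factorial * Gamma (ν + n + 1))]

theorem besselCliffordTerm_le (hν : 0 < ν + 1) (n : ℕ) {z : ℝ} (hz : 0 ≤ z) {a : ℝ}
    (ha : 0 < a) :
    besselCliffordTerm ν n z ≤
      (Gamma (ν + 1))⁻¹ * exp (a / min 1 (ν + 1)) * ((z / a) ^ n / n.factorial) := by
  set m := min 1 (ν + 1)
  have hm : 0 < m := lt_min one_pos hν
  have hΓ := Gamma_pos_of_pos hν
  calc besselCliffordTerm ν n z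
      ≤ z ^ n / (n.factorial * (m ^ n * n.factorial * Gamma (ν + 1))) := by
        unfold besselCliffordTerm
        gcongr
        exact pow_min_mul_factorial_mul_Gamma_le hν n
    _ = (Gamma (ν + 1))⁻¹ * ((a / m) ^ n / n.factorial) * ((z / a) ^ n / n.factorial) := by
        rw [div_pow, div_pow]
        field_simp
    _ ≤ (Gamma (ν + 1))⁻¹ * exp (a / m) * ((z / a) ^ n / n.factorial) := by
        gcongr
        exact pow_div_factorial_le_exp _ (by positivity) n

theorem summable_besselCliffordTerm (hν : 0 < ν + 1) (z : ℝ) :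
    Summable fun n => besselCliffordTerm ν n z := by
  refine .of_norm_bounded ((summable_pow_div_factorial (|z| / 1)).mul_left
    ((Gamma (ν + 1))⁻¹ * exp (1 / min 1 (ν + 1)))) fun n => ?_
  rw [norm_eq_abs, abs_besselCliffordTerm hν]
  exact besselCliffordTerm_le hν n (abs_nonneg z) one_pos

theorem besselClifford_nonneg (hν : 0 < ν + 1) {z : ℝ} (hz : 0 ≤ z) :
    0 ≤ besselClifford ν z :=
  tsum_nonneg fun n => besselCliffordTerm_nonneg hν n hz

theorem besselClifford_le (hν : 0 < ν + 1) {z : ℝ} (hz : 0 ≤ z) {a : ℝ} (ha : 0 < a) :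
    besselClifford ν z ≤ (Gamma (ν + 1))⁻¹ * exp (a / min 1 (ν + 1)) * exp (z / a) := by
  have hexp : exp (z / a) = ∑' n : ℕ, (z / a) ^ n / n.factorial := by
    rw [exp_eq_exp_ℝ, NormedSpace.exp_eq_tsum_div]
  rw [besselClifford, hexp, ← tsum_mul_left]
  exact (summable_besselCliffordTerm hν z).tsum_le_tsum (besselCliffordTerm_le hν · hz ha)
    ((summable_pow_div_factorial _).mul_left _)

theorem factorial_mul_Gamma_succ (n : ℕ) :
    ((n + 1).factorial * Gamma (ν + (n + 1 : ℕ) + 1) : ℝ) =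
      (n + 1) * (n.factorial * Gamma (ν + 1 + n + 1)) := by
  push_cast [Nat.factorial_succ]
  ring_nf

theorem hasDerivAt_besselCliffordTerm_succ (n : ℕ) (z : ℝ) :
    HasDerivAt (besselCliffordTerm ν (n + 1)) (besselCliffordTerm (ν + 1) n z) z := by
  show HasDerivAt (fun w => w ^ (n + 1) / _) _ z
  refine ((hasDerivAt_pow (n + 1) z).div_const _).congr_deriv ?_
  rw [factorial_mul_Gamma_succ, Nat.add_sub_cancel, Nat.cast_succ,
    mul_div_mul_left _ _ (by positivity), besselCliffordTerm]

theorem besselCliffordTerm_le_of_abs_le (hν : 0 < ν + 1) (n : ℕ) {z R : ℝ} (hzR : |z| ≤ R) :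
    |besselCliffordTerm ν n z| ≤ besselCliffordTerm ν n R := by
  have := Gamma_pos_of_pos (add_nat_add_one_pos hν n)
  rw [abs_besselCliffordTerm hν, besselCliffordTerm, besselCliffordTerm]
  gcongr

theorem hasDerivAt_besselClifford (hν : 0 < ν + 1) (z : ℝ) :
    HasDerivAt (besselClifford ν) (besselClifford (ν + 1) z) z := by
  have hsplit : besselClifford ν =
      fun w => besselCliffordTerm ν 0 w + ∑' n : ℕ, besselCliffordTerm ν (n + 1) w :=
    funext fun w => (summable_besselCliffordTerm hν w).tsum_eq_zero_add
  have hconst : HasDerivAt (besselCliffordTerm ν 0) 0 z := by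
    have : besselCliffordTerm ν 0 = fun _ => (Gamma (ν + 1))⁻¹ := by
      funext w; simp [besselCliffordTerm]
    exact this ▸ hasDerivAt_const z _
  have hν' : 0 < ν + 1 + 1 := by linarith
  have hz : z ∈ Metric.ball 0 (|z| + 1) := by
    rw [mem_ball_zero_iff, norm_eq_abs]
    exact lt_add_one _
  have htail := hasDerivAt_tsum_of_isPreconnected (t := Metric.ball 0 (|z| + 1)) (y₀ := 0)
    (summable_besselCliffordTerm hν' (|z| + 1)) Metric.isOpen_ball
    (convex_ball 0 _).isPreconnected (fun n w _ => hasDerivAt_besselCliffordTerm_succ n w)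
    (fun n w hw => besselCliffordTerm_le_of_abs_le hν' n
      (by simpa using (mem_ball_zero_iff.1 hw).le))
    (Metric.mem_ball_self (by positivity))
    ((summable_nat_add_iff 1).2 (summable_besselCliffordTerm hν 0)) hz
  rw [hsplit, besselClifford, ← zero_add (∑' n, _)]
  exact hconst.fun_add htail

theorem besselCliffordTerm_sub_one (hν : 0 < ν) (n : ℕ) (z : ℝ) :
    besselCliffordTerm (ν - 1) n z = (ν + n) * besselCliffordTerm ν n z := by
  have hνn : 0 < ν + n := by positivity
  have := Gamma_pos_of_pos hνn
  rw [besselCliffordTerm, besselCliffordTerm, show ν - 1 + n + 1 = ν + n by ring,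
    Gamma_add_one hνn.ne']
  field_simp

theorem succ_mul_besselCliffordTerm_succ (n : ℕ) (z : ℝ) :
    (n + 1) * besselCliffordTerm ν (n + 1) z = z * besselCliffordTerm (ν + 1) n z := by
  rw [besselCliffordTerm, besselCliffordTerm, factorial_mul_Gamma_succ, mul_div_assoc',
    mul_div_mul_left _ _ (by positivity), pow_succ, mul_comm z, mul_div_right_comm]

theorem besselClifford_sub_one (hν : 0 < ν) (z : ℝ) :
    besselClifford (ν - 1) z = ν * besselClifford ν z + z * besselClifford (ν + 1) z := by
  have hν1 : 0 < ν + 1 := by linarith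
  have hν2 : 0 < ν + 1 + 1 := by linarith
  have hmain : HasSum (fun n => ν * besselCliffordTerm ν n z) (ν * besselClifford ν z) :=
    (summable_besselCliffordTerm hν1 z).hasSum.mul_left ν
  have hshift : HasSum (fun n : ℕ => (n : ℝ) * besselCliffordTerm ν n z)
      (z * besselClifford (ν + 1) z) := by
    rw [← hasSum_nat_add_iff' 1]
    simpa [succ_mul_besselCliffordTerm_succ, besselClifford] using
      (summable_besselCliffordTerm hν2 z).hasSum.mul_left z
  rw [besselClifford, ← (hmain.add hshift).tsum_eq]
  exact tsum_congr fun n => by rw [besselCliffordTerm_sub_one hν]; ring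

theorem besselI_two_mul_sqrt_s12 {z : ℝ} (hz : 0 ≤ z) :
    besselI ν (2 * √z) = z ^ (ν / 2) * besselClifford ν z := by
  have hsq : (2 * √z) ^ 2 / 4 = z := by rw [mul_pow, sq_sqrt hz]; ring
  rw [besselI, hsq, mul_div_cancel_left₀ _ two_ne_zero, sqrt_eq_rpow, ← rpow_mul hz,
    one_div_mul_eq_div]
  rfl

end BesselClifford

noncomputable def nuttallIntegrand (p ν x t : ℝ) : ℝ :=
  t ^ p * exp (-t - x) * besselClifford ν (x * t)

section NuttallIntegrand

variable {p ν x : ℝ}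

theorem nuttallQ_eq_integral_nuttallIntegrand (η μ : ℝ) {y : ℝ} (hx : 0 < x) (hy : 0 ≤ y) :
    nuttallQ η μ x y = ∫ t in Ioi y, nuttallIntegrand (η + μ - 1) (μ - 1) x t := by
  have hintegrand : ∀ t ∈ Ioi y, t ^ (η + (μ - 1) / 2) * exp (-t - x) *
      besselI (μ - 1) (2 * √(x * t)) =
        x ^ ((μ - 1) / 2) * nuttallIntegrand (η + μ - 1) (μ - 1) x t := by
    intro t ht
    have ht : 0 < t := hy.trans_lt ht
    have hsplit : t ^ (η + μ - 1) = t ^ (η + (μ - 1) / 2) * t ^ ((μ - 1) / 2) := by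
      rw [← rpow_add ht]; ring_nf
    rw [besselI_two_mul_sqrt_s12 (by positivity), mul_rpow hx.le ht.le, nuttallIntegrand, hsplit]
    ring
  rw [nuttallQ, setIntegral_congr_fun measurableSet_Ioi hintegrand, integral_const_mul,
    ← mul_assoc, ← rpow_add hx, show (1 - μ) / 2 + (μ - 1) / 2 = 0 by ring, rpow_zero,
    one_mul]

theorem nuttallIntegrand_isBigO (hx : 0 < x) (hν : 0 < ν + 1) :
    nuttallIntegrand p ν x =O[atTop] fun t => t ^ p * exp (-(1 / 2) * t) := by
  set K := (Gamma (ν + 1))⁻¹ * exp (2 * x / min 1 (ν + 1))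
  refine Asymptotics.isBigO_iff.2 ⟨K, ?_⟩
  filter_upwards [eventually_gt_atTop 0] with t ht
  have hC := besselClifford_le hν (mul_pos hx ht).le (by positivity : 0 < 2 * x)
  have hC0 := besselClifford_nonneg hν (mul_pos hx ht).le
  have hexp : exp (-t - x) * exp (x * t / (2 * x)) ≤ exp (-(1 / 2) * t) := by
    rw [← exp_add, exp_le_exp]
    field_simp
    linarith
  rw [norm_eq_abs, norm_eq_abs, nuttallIntegrand, abs_of_nonneg (by positivity),
    abs_of_nonneg (by positivity)]
  calc t ^ p * exp (-t - x) * besselClifford ν (x * t)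
      ≤ t ^ p * exp (-t - x) * (K * exp (x * t / (2 * x))) := by gcongr
    _ = K * (t ^ p * (exp (-t - x) * exp (x * t / (2 * x)))) := by ring
    _ ≤ K * (t ^ p * exp (-(1 / 2) * t)) := by gcongr

theorem continuousOn_nuttallIntegrand (hν : 0 < ν + 1) {y : ℝ} (hy : 0 < y) :
    ContinuousOn (nuttallIntegrand p ν x) (Ici y) := by
  have hC : Continuous (besselClifford ν) :=
    continuous_iff_continuousAt.2 fun z => (hasDerivAt_besselClifford hν z).continuousAt
  refine .mul (.mul ?_ (by fun_prop)) (hC.comp (by fun_prop)).continuousOn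
  exact fun t ht =>
    (continuousAt_rpow_const t p (Or.inl (hy.trans_le ht).ne')).continuousWithinAt

theorem integrableOn_nuttallIntegrand (hx : 0 < x) (hν : 0 < ν + 1) {y : ℝ} (hy : 0 < y) :
    IntegrableOn (nuttallIntegrand p ν x) (Ioi y) := by
  refine integrable_of_isBigO_exp_neg (b := 1 / 4) (by norm_num)
    (continuousOn_nuttallIntegrand hν hy) ((nuttallIntegrand_isBigO hx hν).trans ?_)
  have h := ((isLittleO_rpow_exp_pos_mul_atTop p (by norm_num : (0 : ℝ) < 1 / 4)).mul_isBigO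
    (Asymptotics.isBigO_refl (fun t => exp (-(1 / 2) * t)) atTop)).isBigO
  refine h.congr_right fun t => ?_
  rw [← exp_add]
  ring_nf

theorem hasDerivAt_nuttallIntegrand (hν : 0 < ν) {t : ℝ} (ht : 0 < t) :
    HasDerivAt (nuttallIntegrand p ν x)
      ((p - ν) * nuttallIntegrand (p - 1) ν x t + nuttallIntegrand (p - 1) (ν - 1) x t -
        nuttallIntegrand p ν x t) t := by
  have hpow := hasDerivAt_rpow_const (p := p) (Or.inl ht.ne')
  have hexp : HasDerivAt (fun s => exp (-s - x)) (-exp (-t - x)) t := by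
    simpa using ((hasDerivAt_id t).neg.sub_const x).exp
  have hC : HasDerivAt (fun s => besselClifford ν (x * s))
      (besselClifford (ν + 1) (x * t) * (x * 1)) t :=
    (hasDerivAt_besselClifford (by linarith) (x * t)).comp t ((hasDerivAt_id t).const_mul x)
  refine ((hpow.fun_mul hexp).fun_mul hC).congr_deriv ?_
  have ht' : t ^ p = t ^ (p - 1) * t := by rw [← rpow_add_one ht.ne', sub_add_cancel]
  simp only [nuttallIntegrand, besselClifford_sub_one hν, ht']
  ring

theorem integral_nuttallIntegrand (hx : 0 < x) (hν : 0 < ν) {y : ℝ} (hy : 0 < y) :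
    ∫ t in Ioi y, nuttallIntegrand p ν x t =
      (∫ t in Ioi y, nuttallIntegrand (p - 1) (ν - 1) x t) +
        (p - ν) * (∫ t in Ioi y, nuttallIntegrand (p - 1) ν x t) +
          nuttallIntegrand p ν x y := by
  have hν1 : 0 < ν + 1 := by linarith
  have hderiv : ∀ t ∈ Ici y, HasDerivAt (nuttallIntegrand p ν x) _ t :=
    fun t ht => hasDerivAt_nuttallIntegrand hν (hy.trans_le ht)
  have hint := integrableOn_nuttallIntegrand (p := p - 1) hx hν1 hy
  have hint' := integrableOn_nuttallIntegrand (p := p - 1) hx (by linarith : 0 < ν - 1 + 1) hy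
  have hint₀ := integrableOn_nuttallIntegrand (p := p) hx hν1 hy
  have hint_sum : IntegrableOn (fun t => (p - ν) * nuttallIntegrand (p - 1) ν x t +
      nuttallIntegrand (p - 1) (ν - 1) x t) (Ioi y) := (hint.const_mul _).add hint'
  have hint_deriv := hint_sum.sub hint₀
  have hlim := tendsto_zero_of_hasDerivAt_of_integrableOn_Ioi
    (fun t ht => hderiv t (mem_Ici_of_Ioi ht)) hint_deriv hint₀
  have hFTC := integral_Ioi_of_hasDerivAt_of_tendsto' hderiv hint_deriv hlim
  rw [integral_sub hint_sum hint₀, integral_add (hint.const_mul _) hint',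
    integral_const_mul] at hFTC
  linear_combination -hFTC

theorem nuttallIntegrand_eq_scaled_besselI (η μ : ℝ) {y : ℝ} (hx : 0 < x) (hy : 0 < y) :
    nuttallIntegrand (η + μ) μ x y =
      (y / x) ^ (μ / 2) * y ^ η * exp (-(√x - √y) ^ 2) *
        (exp (-(2 * √(x * y))) * besselI μ (2 * √(x * y))) := by
  have hexp : exp (-(√x - √y) ^ 2) * exp (-(2 * √(x * y))) = exp (-y - x) := by
    rw [← exp_add, sqrt_mul hx.le]
    congr 1
    linear_combination -sq_sqrt hx.le - sq_sqrt hy.le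
  rw [nuttallIntegrand, besselI_two_mul_sqrt_s12 (by positivity), mul_rpow hx.le hy.le,
    div_rpow hy.le hx.le, show η + μ = η + μ / 2 + μ / 2 by ring, rpow_add hy, rpow_add hy,
    ← hexp]
  have := rpow_pos_of_pos hx (μ / 2)
  field_simp

end NuttallIntegrand

theorem nuttallQ_recurrence_scaled_general (η μ x y : ℝ) (hμ : 0 < μ)
    (hx : 0 < x) (hy : 0 < y) :
    nuttallQ η (μ + 1) x y =
      nuttallQ η μ x y + η * nuttallQ (η - 1) (μ + 1) x y +
        (y / x) ^ (μ / 2) * y ^ η * Real.exp (-(Real.sqrt x - Real.sqrt y) ^ 2) *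
          (Real.exp (-(2 * Real.sqrt (x * y))) * besselI μ (2 * Real.sqrt (x * y))) := by
  have hrec := integral_nuttallIntegrand (p := η + μ) hx hμ hy
  rw [add_sub_cancel_right] at hrec
  rw [nuttallQ_eq_integral_nuttallIntegrand _ _ hx hy.le,
    nuttallQ_eq_integral_nuttallIntegrand _ _ hx hy.le,
    nuttallQ_eq_integral_nuttallIntegrand _ _ hx hy.le,
    ← nuttallIntegrand_eq_scaled_besselI η μ hx hy,
    show η + (μ + 1) - 1 = η + μ by ring, show η - 1 + (μ + 1) - 1 = η + μ - 1 by ring,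
    add_sub_cancel_right]
  exact hrec

theorem nuttallQ_recurrence_scaled (η μ x y : ℝ) (hη : 1 ≤ η) (hμ : 0 < μ)
    (hx : 0 < x) (hy : 0 < y) :
    nuttallQ η (μ + 1) x y =
      nuttallQ η μ x y + η * nuttallQ (η - 1) (μ + 1) x y +
        (y / x) ^ (μ / 2) * y ^ η * Real.exp (-(Real.sqrt x - Real.sqrt y) ^ 2) *
          (Real.exp (-(2 * Real.sqrt (x * y))) * besselI μ (2 * Real.sqrt (x * y))) :=
  nuttallQ_recurrence_scaled_general η μ x y hμ hx hy
end

section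
/- For ν ≥ 0 and z > 0, the ratio of modified Bessel functions satisfies 0 < I_{ν+1}(z)/I_ν(z) < 1. -/
open Real MeasureTheory

/-! With `w = z / 2` and `bₙ = w^(2n) / (n! Γ(ν + n + 1))` we have `I_ν(z) = w^ν Σ bₙ` and
`I_{ν+1}(z) = w^ν Σ w bₙ / (ν + n + 1)`. Termwise `2 w bₙ / (ν + n + 1) ≤ bₙ + bₙ₊₁`, which amounts
to `(n + 1) ν + (n + 1 - w)² ≥ 0`; summing over `n` gives `2 I_{ν+1}(z) ≤ 2 I_ν(z) - w^ν b₀`.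
Positivity of both functions is termwise. -/

noncomputable def besselTerm (ν x : ℝ) (n : ℕ) : ℝ :=
  x ^ n / (n.factorial * Real.Gamma (ν + n + 1))

lemma besselI_eq_tsum_besselTerm (ν z : ℝ) :
    besselI ν z = (z / 2) ^ ν * ∑' n, besselTerm ν ((z / 2) ^ 2) n := by
  rw [div_pow]; norm_num; rfl

section besselTerm

variable {ν x : ℝ}

lemma add_natCast_add_one_pos (hν : -1 < ν) (n : ℕ) : 0 < ν + n + 1 := by
  linarith [n.cast_nonneg (α := ℝ)]

lemma besselTerm_pos (hν : -1 < ν) (hx : 0 < x) (n : ℕ) : 0 < besselTerm ν x n := by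
  have := Real.Gamma_pos_of_pos (add_natCast_add_one_pos hν n)
  unfold besselTerm
  positivity

lemma besselTerm_nonneg (hν : -1 < ν) (hx : 0 ≤ x) (n : ℕ) : 0 ≤ besselTerm ν x n := by
  have := Real.Gamma_pos_of_pos (add_natCast_add_one_pos hν n)
  unfold besselTerm
  positivity

lemma besselTerm_succ (hν : -1 < ν) (n : ℕ) :
    besselTerm ν x (n + 1) = besselTerm ν x n * x / ((n + 1) * (ν + n + 1)) := by
  have hs := add_natCast_add_one_pos hν n
  have hΓ : Real.Gamma (ν + (n + 1 : ℕ) + 1) = (ν + n + 1) * Real.Gamma (ν + n + 1) := by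
    rw [← Real.Gamma_add_one hs.ne']; push_cast; ring_nf
  have := Real.Gamma_pos_of_pos hs
  unfold besselTerm
  rw [hΓ, Nat.factorial_succ, pow_succ]
  push_cast
  field_simp

lemma besselTerm_add_one (hν : -1 < ν) (n : ℕ) :
    besselTerm (ν + 1) x n = besselTerm ν x n / (ν + n + 1) := by
  have hΓ : Real.Gamma (ν + 1 + n + 1) = (ν + n + 1) * Real.Gamma (ν + n + 1) := by
    rw [← Real.Gamma_add_one (add_natCast_add_one_pos hν n).ne']; ring_nf
  unfold besselTerm
  rw [hΓ, div_div, mul_left_comm, mul_comm (ν + n + 1)]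

lemma summable_besselTerm (hν : -1 < ν) (x : ℝ) : Summable (besselTerm ν x) := by
  refine summable_of_ratio_norm_eventually_le (r := 1 / 2) (by norm_num) ?_
  filter_upwards [Filter.eventually_ge_atTop (⌈2 * |x|⌉₊ + 1)] with n hn
  have hn : 2 * |x| + 1 ≤ n := by
    have := Nat.le_ceil (2 * |x|)
    have : ((⌈2 * |x|⌉₊ + 1 : ℕ) : ℝ) ≤ n := by exact_mod_cast hn
    push_cast at this
    linarith
  have hden : 2 * |x| ≤ (n + 1) * (ν + n + 1) := by nlinarith [abs_nonneg x]
  have hpos : (0 : ℝ) < (n + 1) * (ν + n + 1) :=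
    mul_pos (by positivity) (add_natCast_add_one_pos hν n)
  rw [besselTerm_succ hν, norm_div, norm_mul, Real.norm_eq_abs x, Real.norm_of_nonneg hpos.le,
    div_le_iff₀ hpos]
  nlinarith [norm_nonneg (besselTerm ν x n)]

lemma two_mul_besselTerm_add_one_le (hν : 0 ≤ ν) (w : ℝ) (n : ℕ) :
    2 * w * besselTerm (ν + 1) (w ^ 2) n ≤
      besselTerm ν (w ^ 2) n + besselTerm ν (w ^ 2) (n + 1) := by
  have hν' : -1 < ν := by linarith
  have hb := besselTerm_nonneg hν' (sq_nonneg w) n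
  have hs := add_natCast_add_one_pos hν' n
  rw [besselTerm_add_one hν', besselTerm_succ hν']
  have : besselTerm ν (w ^ 2) n + besselTerm ν (w ^ 2) n * w ^ 2 / ((n + 1) * (ν + n + 1)) -
      2 * w * (besselTerm ν (w ^ 2) n / (ν + n + 1)) =
      besselTerm ν (w ^ 2) n * ((n + 1) * ν + (n + 1 - w) ^ 2) / ((n + 1) * (ν + n + 1)) := by
    field_simp
    ring
  have : 0 ≤ besselTerm ν (w ^ 2) n * ((n + 1) * ν + (n + 1 - w) ^ 2) / ((n + 1) * (ν + n + 1)) := by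
    positivity
  linarith

end besselTerm

lemma two_mul_tsum_le_of_two_mul_le_add_succ {f g : ℕ → ℝ} (hf : Summable f) (hg : Summable g)
    (h : ∀ n, 2 * g n ≤ f n + f (n + 1)) : 2 * ∑' n, g n ≤ 2 * ∑' n, f n - f 0 := by
  have hf' : Summable fun n ↦ f (n + 1) := (summable_nat_add_iff 1).mpr hf
  calc 2 * ∑' n, g n = ∑' n, 2 * g n := (tsum_mul_left).symm
    _ ≤ ∑' n, (f n + f (n + 1)) := (hg.mul_left 2).tsum_le_tsum h (hf.add hf')
    _ = 2 * ∑' n, f n - f 0 := by rw [hf.tsum_add hf', hf.tsum_eq_zero_add]; ring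

lemma besselI_pos {ν z : ℝ} (hν : -1 < ν) (hz : 0 < z) : 0 < besselI ν z := by
  have hx : 0 < (z / 2) ^ 2 := by positivity
  rw [besselI_eq_tsum_besselTerm]
  exact mul_pos (by positivity) <|
    (summable_besselTerm hν _).tsum_pos (fun n ↦ (besselTerm_pos hν hx n).le) 0
      (besselTerm_pos hν hx 0)

lemma besselI_add_one_lt {ν z : ℝ} (hν : 0 ≤ ν) (hz : 0 < z) : besselI (ν + 1) z < besselI ν z := by
  have hν' : -1 < ν := by linarith
  rw [besselI_eq_tsum_besselTerm, besselI_eq_tsum_besselTerm]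
  set w := z / 2
  have hw : 0 < w := by positivity
  have hsum := two_mul_tsum_le_of_two_mul_le_add_succ (summable_besselTerm hν' (w ^ 2))
    ((summable_besselTerm (ν := ν + 1) (by linarith) (w ^ 2)).mul_left w)
    (fun n ↦ by rw [← mul_assoc]; exact two_mul_besselTerm_add_one_le hν w n)
  have h₀ := besselTerm_pos hν' (by positivity : 0 < w ^ 2) 0
  rw [tsum_mul_left] at hsum
  rw [Real.rpow_add_one hw.ne', mul_assoc]
  exact mul_lt_mul_of_pos_left (by linarith) (by positivity)

theorem besselI_ratio_bounds (ν z : ℝ) (hν : 0 ≤ ν) (hz : 0 < z) :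
    0 < besselI (ν + 1) z / besselI ν z ∧ besselI (ν + 1) z / besselI ν z < 1 := by
  have hI : 0 < besselI ν z := besselI_pos (by linarith) hz
  exact ⟨div_pos (besselI_pos (by linarith) hz) hI,
    (div_lt_one hI).mpr (besselI_add_one_lt hν hz)⟩
end
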